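/- Define θ : [0,1) → (1/2, 1] by θ(r) = 1 for 0 ≤ r ≤ (√5 − 1)/2, θ(r) = (1 − r)·r^{−2} for (√5 − 1)/2 ≤ r ≤ 2^{−1/2}, and θ(r) = (1 + r)^{−1} for 2^{−1/2} ≤ r < 1. Let (X,d) be a complete metric space, f : X → X, and r ∈ [0,1). If for all x, y ∈ X the implication θ(r)·d(x, f(x)) ≤ d(x,y) ⟹ d(f(x), f(y)) ≤ r·d(x,y) holds, then f has a fixed point x̄ ∈ X, and lim_{n→∞} f^n(x) = x̄ for every x ∈ X. -/
import Mathlib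


/-- Suzuki's function `θ : [0,1) → (1/2,1]`. -/
noncomputable def suzukiTheta (r : ℝ) : ℝ :=
  if r ≤ (Real.sqrt 5 - 1) / 2 then 1
  else if r ≤ (Real.sqrt 2)⁻¹ then (1 - r) / r ^ 2
  else (1 + r)⁻¹

set_option maxHeartbeats 2000000 in
/-- Suzuki: if `(X,d)` is a complete metric space, `r ∈ [0,1)`, and `f : X → X` satisfies
`θ(r)·d(x,f(x)) ≤ d(x,y) ⟹ d(f(x),f(y)) ≤ r·d(x,y)` for all `x,y`, then `f` has a fixed
point `x̄` and `f^[n] x → x̄` for every `x`. -/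
theorem suzuki_fixedPoint {X : Type*} [MetricSpace X] [CompleteSpace X] [Nonempty X]
    (f : X → X) (r : ℝ) (hr0 : 0 ≤ r) (hr1 : r < 1)
    (h : ∀ x y : X, suzukiTheta r * dist x (f x) ≤ dist x y →
      dist (f x) (f y) ≤ r * dist x y) :
    ∃ xbar : X, f xbar = xbar ∧
      ∀ x : X, Filter.Tendsto (fun n => f^[n] x) Filter.atTop (nhds xbar) := by
  obtain ⟨x₀⟩ := ‹Nonempty X›
  set t := suzukiTheta r with htdef
  have h5s : Real.sqrt 5 ^ 2 = 5 := Real.sq_sqrt (by norm_num)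
  have h5nn : (0:ℝ) ≤ Real.sqrt 5 := Real.sqrt_nonneg 5
  have h5l : (2:ℝ) ≤ Real.sqrt 5 := by nlinarith [sq_nonneg (Real.sqrt 5 - 2)]
  have h2s : Real.sqrt 2 ^ 2 = 2 := Real.sq_sqrt (by norm_num)
  have h2nn : (0:ℝ) ≤ Real.sqrt 2 := Real.sqrt_nonneg 2
  have h2pos : (0:ℝ) < Real.sqrt 2 := by nlinarith
  have ht0 : 0 ≤ t := by
    rw [htdef, suzukiTheta]
    split_ifs with h1 h2
    · norm_num
    · exact div_nonneg (by linarith) (sq_nonneg r)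
    · exact inv_nonneg.2 (by linarith)
  have ht1 : t ≤ 1 := by
    rw [htdef, suzukiTheta]
    split_ifs with h1 h2
    · exact le_rfl
    · push_neg at h1
      have hrpos : 0 < r := by nlinarith
      rw [div_le_one (by positivity)]
      nlinarith
    · push_neg at h1
      exact inv_le_one_of_one_le₀ (by linarith)
  -- basic iterate contraction
  have step : ∀ x : X, dist (f x) (f (f x)) ≤ r * dist x (f x) := by
    intro x
    exact h x (f x) (mul_le_of_le_one_left dist_nonneg ht1)
  have orbit : ∀ n : ℕ, dist (f^[n] x₀) (f^[n+1] x₀) ≤ r ^ n * dist x₀ (f x₀) := by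
    intro n
    induction n with
    | zero => simp
    | succ n ih =>
      have e1 : f^[n+1] x₀ = f (f^[n] x₀) := Function.iterate_succ_apply' f n x₀
      have e2 : f^[n+2] x₀ = f (f^[n+1] x₀) := Function.iterate_succ_apply' f (n+1) x₀
      rw [e2, e1]
      calc dist (f (f^[n] x₀)) (f (f (f^[n] x₀)))
          ≤ r * dist (f^[n] x₀) (f (f^[n] x₀)) := step _
        _ = r * dist (f^[n] x₀) (f^[n+1] x₀) := by rw [← e1]
        _ ≤ r * (r ^ n * dist x₀ (f x₀)) := mul_le_mul_of_nonneg_left ih hr0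
        _ = r ^ (n+1) * dist x₀ (f x₀) := by ring
  have hc : CauchySeq (fun n => f^[n] x₀) :=
    cauchySeq_of_le_geometric r (dist x₀ (f x₀)) hr1
      (fun n => by
        have := orbit n
        calc dist (f^[n] x₀) (f^[n+1] x₀) ≤ r ^ n * dist x₀ (f x₀) := this
          _ = dist x₀ (f x₀) * r ^ n := by ring)
  obtain ⟨z, hz⟩ := cauchySeq_tendsto_of_complete hc
  have hdz : ∀ ε > (0:ℝ), ∃ N, ∀ n ≥ N, dist (f^[n] x₀) z < ε := by
    intro ε hε
    exact Metric.tendsto_atTop.1 hz ε hε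
  -- the key auxiliary inequality
  have star : ∀ y : X, y ≠ z → dist z (f y) ≤ r * dist z y := by
    intro y hy
    have hD : 0 < dist z y := dist_pos.2 (Ne.symm hy)
    refine le_of_forall_pos_le_add fun ε hε => ?_
    have hδpos : 0 < min (ε / 2) (dist z y / 3) := lt_min (by linarith) (by linarith)
    obtain ⟨N, hN⟩ := hdz _ hδpos
    have hb1 : dist (f^[N] x₀) z < min (ε / 2) (dist z y / 3) := hN N le_rfl
    have hb2 : dist (f^[N+1] x₀) z < min (ε / 2) (dist z y / 3) := hN (N+1) (by omega)
    have hm1 : min (ε / 2) (dist z y / 3) ≤ ε / 2 := min_le_left _ _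
    have hm2 : min (ε / 2) (dist z y / 3) ≤ dist z y / 3 := min_le_right _ _
    have e1 : f (f^[N] x₀) = f^[N+1] x₀ := (Function.iterate_succ_apply' f N x₀).symm
    have hcond : t * dist (f^[N] x₀) (f (f^[N] x₀)) ≤ dist (f^[N] x₀) y := by
      rw [e1]
      have t1 : dist (f^[N] x₀) (f^[N+1] x₀) ≤ dist (f^[N] x₀) z + dist z (f^[N+1] x₀) :=
        dist_triangle _ _ _
      have t2 : dist z y ≤ dist z (f^[N] x₀) + dist (f^[N] x₀) y := dist_triangle _ _ _
      have c1 : dist z (f^[N+1] x₀) = dist (f^[N+1] x₀) z := dist_comm _ _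
      have c2 : dist z (f^[N] x₀) = dist (f^[N] x₀) z := dist_comm _ _
      have tle : t * dist (f^[N] x₀) (f^[N+1] x₀) ≤ dist (f^[N] x₀) (f^[N+1] x₀) :=
        mul_le_of_le_one_left dist_nonneg ht1
      linarith
    have hkey := h (f^[N] x₀) y hcond
    rw [e1] at hkey
    have t3 : dist z (f y) ≤ dist z (f^[N+1] x₀) + dist (f^[N+1] x₀) (f y) := dist_triangle _ _ _
    have t4 : dist (f^[N] x₀) y ≤ dist (f^[N] x₀) z + dist z y := dist_triangle _ _ _
    have c1 : dist z (f^[N+1] x₀) = dist (f^[N+1] x₀) z := dist_comm _ _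
    have hr' : r * dist (f^[N] x₀) y ≤ r * (dist (f^[N] x₀) z + dist z y) :=
      mul_le_mul_of_nonneg_left t4 hr0
    nlinarith [hb1, hb2]
  -- z is a fixed point
  have hfz : f z = z := by
    rcases lt_or_ge r (Real.sqrt 2)⁻¹ with hcase | hcase
    · -- small r case
      by_contra hne
      have ha : 0 < dist z (f z) := dist_pos.2 fun e => hne e.symm
      have hrs : r * Real.sqrt 2 < 1 := by
        have := mul_lt_mul_of_pos_right hcase h2pos
        rwa [inv_mul_cancel₀ (ne_of_gt h2pos)] at this
      have h2r : 2 * r ^ 2 < 1 := by nlinarith [mul_nonneg hr0 h2nn]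
      have hCr : t * r ^ 2 ≤ 1 - r := by
        rw [htdef, suzukiTheta]
        split_ifs with h1 h2
        · nlinarith
        · push_neg at h1
          have hrpos : 0 < r := by nlinarith
          rw [div_mul_cancel₀ _ (by positivity)]
        · push_neg at h2
          linarith
      set a := dist z (f z) with hadef
      have s1 : dist (f z) (f (f z)) ≤ r * a := step z
      have s2 : dist (f (f z)) (f (f (f z))) ≤ r * dist (f z) (f (f z)) := step (f z)
      have s3 : dist z (f (f z)) ≤ r * a := star (f z) hne
      have tri1 : a ≤ dist z (f (f z)) + dist (f (f z)) (f z) := dist_triangle _ _ _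
      have c1 : dist (f (f z)) (f z) = dist (f z) (f (f z)) := dist_comm _ _
      have s4 : (1 - r) * a ≤ dist (f (f z)) z := by
        have c2 : dist (f (f z)) z = dist z (f (f z)) := dist_comm _ _
        nlinarith
      have s1' : r * dist (f z) (f (f z)) ≤ r * (r * a) := mul_le_mul_of_nonneg_left s1 hr0
      have s2' : dist (f (f z)) (f (f (f z))) ≤ r * (r * a) := le_trans s2 s1'
      have s5 : t * dist (f (f z)) (f (f (f z))) ≤ dist (f (f z)) z := by
        have u1 : t * dist (f (f z)) (f (f (f z))) ≤ t * (r * (r * a)) :=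
          mul_le_mul_of_nonneg_left s2' ht0
        have u2 : t * (r * (r * a)) ≤ (1 - r) * a := by
          calc t * (r * (r * a)) = t * r ^ 2 * a := by ring
            _ ≤ (1 - r) * a := mul_le_mul_of_nonneg_right hCr ha.le
        linarith
      have s6 : dist (f (f (f z))) (f z) ≤ r * dist (f (f z)) z := h (f (f z)) z s5
      have s7 : dist z (f (f (f z))) ≤ r * (r * a) := by
        by_cases hzz : f (f z) = z
        · have e : dist z (f (f (f z))) = dist (f (f z)) (f (f (f z))) := by rw [hzz]
          rw [e]
          exact s2'
        · have u3 := star (f (f z)) hzz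
          have u4 : r * dist z (f (f z)) ≤ r * (r * a) := mul_le_mul_of_nonneg_left s3 hr0
          linarith
      have tri2 : a ≤ dist z (f (f (f z))) + dist (f (f (f z))) (f z) := dist_triangle _ _ _
      have c3 : dist (f (f z)) z = dist z (f (f z)) := dist_comm _ _
      have w1 : r * dist (f (f z)) z ≤ r * (r * a) := by
        rw [c3]; exact mul_le_mul_of_nonneg_left s3 hr0
      have w2 : a ≤ 2 * (r * (r * a)) := by linarith
      have w3 : 2 * r ^ 2 * a < 1 * a := mul_lt_mul_of_pos_right h2r ha
      have w4 : 2 * (r * (r * a)) = 2 * r ^ 2 * a := by ring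
      linarith
    · -- large r case
      have hD' : t * (1 + r) ≤ 1 := by
        rw [htdef, suzukiTheta]
        split_ifs with h1 h2
        · exfalso
          have hs5 : Real.sqrt 5 < 2.24 := by nlinarith
          have hs2 : Real.sqrt 2 < 1.5 := by nlinarith
          have : (1.5:ℝ)⁻¹ < (Real.sqrt 2)⁻¹ := by
            exact inv_strictAnti₀ h2pos hs2
          have hr23 : (1.5:ℝ)⁻¹ < r := lt_of_lt_of_le this hcase
          norm_num at hr23
          linarith
        · push_neg at h1
          have hrpos : 0 < r := by nlinarith
          have hr2 : 1 ≤ r * Real.sqrt 2 := by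
            have := mul_le_mul_of_nonneg_right hcase (le_of_lt h2pos)
            rwa [inv_mul_cancel₀ (ne_of_gt h2pos)] at this
          have hrsq : 1 ≤ 2 * r ^ 2 := by nlinarith
          rw [div_mul_eq_mul_div, div_le_one (by positivity)]
          nlinarith
        · rw [inv_mul_cancel₀ (by positivity)]
      have key : ∀ n : ℕ, dist (f^[n+1] x₀) (f z) ≤ r * dist (f^[n] x₀) z ∨
          dist (f^[n+2] x₀) (f z) ≤ r * dist (f^[n+1] x₀) z := by
        intro n
        set u := f^[n] x₀ with hu
        have e1 : f^[n+1] x₀ = f u := Function.iterate_succ_apply' f n x₀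
        have e2 : f^[n+2] x₀ = f (f u) := by
          rw [show n+2 = (n+1)+1 from rfl, Function.iterate_succ_apply' f (n+1) x₀, e1]
        by_cases hcnd : t * dist u (f u) ≤ dist u z
        · left; rw [e1]; exact h u z hcnd
        · right
          rw [e2, e1]
          apply h (f u) z
          by_contra hc2
          push_neg at hcnd hc2
          have b1 : t * dist (f u) (f (f u)) ≤ t * (r * dist u (f u)) :=
            mul_le_mul_of_nonneg_left (step u) ht0
          have b2 : dist u (f u) ≤ dist u z + dist z (f u) := dist_triangle _ _ _
          have b3 : dist z (f u) = dist (f u) z := dist_comm _ _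
          have b4 : t * (1 + r) * dist u (f u) ≤ dist u (f u) :=
            mul_le_of_le_one_left dist_nonneg hD'
          nlinarith
      have hz0 : dist z (f z) ≤ 0 := by
        refine le_of_forall_pos_le_add fun ε hε => ?_
        obtain ⟨N, hN⟩ := hdz (ε / 2) (by linarith)
        have gen : ∀ m, N ≤ m → dist (f^[m+1] x₀) (f z) ≤ r * dist (f^[m] x₀) z →
            dist z (f z) ≤ 0 + ε := by
          intro m hm hk
          have t1 : dist z (f z) ≤ dist z (f^[m+1] x₀) + dist (f^[m+1] x₀) (f z) :=
            dist_triangle _ _ _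
          have c1 : dist z (f^[m+1] x₀) = dist (f^[m+1] x₀) z := dist_comm _ _
          have b1 : dist (f^[m+1] x₀) z < ε / 2 := hN _ (by omega)
          have b2 : dist (f^[m] x₀) z < ε / 2 := hN _ hm
          nlinarith [dist_nonneg (x := f^[m] x₀) (y := z)]
        rcases key N with hk | hk
        · exact gen N le_rfl hk
        · exact gen (N+1) (by omega) hk
      have : dist (f z) z ≤ 0 := by rwa [dist_comm]
      exact dist_le_zero.1 this
  refine ⟨z, hfz, fun x => ?_⟩
  have hb : ∀ n : ℕ, dist (f^[n] x) z ≤ r ^ n * dist x z := by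
    intro n
    induction n with
    | zero => simp
    | succ n ih =>
      have e1 : f^[n+1] x = f (f^[n] x) := Function.iterate_succ_apply' f n x
      have hcnd : t * dist z (f z) ≤ dist z (f^[n] x) := by
        rw [hfz]
        simp only [dist_self, mul_zero]
        exact dist_nonneg
      have hk := h z (f^[n] x) hcnd
      rw [hfz] at hk
      rw [e1]
      calc dist (f (f^[n] x)) z = dist z (f (f^[n] x)) := dist_comm _ _
        _ ≤ r * dist z (f^[n] x) := hk
        _ = r * dist (f^[n] x) z := by rw [dist_comm]
        _ ≤ r * (r ^ n * dist x z) := mul_le_mul_of_nonneg_left ih hr0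
        _ = r ^ (n+1) * dist x z := by ring
  rw [tendsto_iff_dist_tendsto_zero]
  apply squeeze_zero (fun n => dist_nonneg) hb
  have := tendsto_pow_atTop_nhds_zero_of_lt_one hr0 hr1
  simpa using this.mul_const (dist x z)
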